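/- Let H_J = σ_x^1 + Σ_{k=1}^{N−1} σ_x^k σ_x^{k+1} + σ_x^N and H_h = Σ_{k=1}^N σ_z^k on an N-qubit chain, extended by two edge ancilla qubits to the Hamiltonians H̃_J = i Σ_{k=0}^{N} γ_{2k+1}γ_{2k+2} and H̃_h = i Σ_{k=1}^{N} γ_{2k}γ_{2k+1} in Jordan-Wigner Majorana form. Then the unitary (e^{iπH̃_h/4}·e^{iπH̃_J/4})^{N+1} maps γ_0 ↦ γ_0, γ_{2N+3} ↦ γ_{2N+3}, and γ_k ↦ (−1)^{k−1}γ_{2N+3−k} for 1 ≤ k ≤ 2N+2. -/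

import Mathlib

noncomputable section
open scoped Matrix

/-- Configuration space of a chain of `n` qubits. -/
abbrev Cfg (n : ℕ) := Fin n → Fin 2

/-- Operators on a chain of `n` qubits. -/
abbrev Op (n : ℕ) := Matrix (Cfg n) (Cfg n) ℂ

def pX : Matrix (Fin 2) (Fin 2) ℂ := !![0, 1; 1, 0]
def pY : Matrix (Fin 2) (Fin 2) ℂ := !![0, -Complex.I; Complex.I, 0]
def pZ : Matrix (Fin 2) (Fin 2) ℂ := !![1, 0; 0, -1]

/-- The single-qubit operator `P` acting on site `j` (identity elsewhere). -/
def site {n : ℕ} (P : Matrix (Fin 2) (Fin 2) ℂ) (j : Fin n) : Op n :=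
  fun f g => if ∀ i, i ≠ j → f i = g i then P (f j) (g j) else 0

/-- The Jordan-Wigner parity string `∏_{j=0}^{k-1} (−σ_z^j)` over sites `j < k`. -/
def parityBelow (n : ℕ) : ℕ → Op n
  | 0 => 1
  | k + 1 => parityBelow n k * (if h : k < n then -(site pZ ⟨k, h⟩) else 1)

/-- The Jordan-Wigner Majorana operator:
`γ_{2k} = (∏_{j<k}(−σ_z^j))σ_x^k`, `γ_{2k+1} = (∏_{j<k}(−σ_z^j))σ_y^k`. -/
def maj (n : ℕ) (m : ℕ) : Op n :=
  if h : m / 2 < n then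
    parityBelow n (m / 2) * site (if m % 2 = 0 then pX else pY) ⟨m / 2, h⟩
  else 0


/-- The extended Ising Hamiltonian `H̃_J = i Σ_{k=0}^{N} γ_{2k+1} γ_{2k+2}`. -/
def HJtil (N : ℕ) : Op (N + 2) :=
  Complex.I • ∑ k ∈ Finset.range (N + 1), maj (N + 2) (2 * k + 1) * maj (N + 2) (2 * k + 2)

/-- The extended field Hamiltonian `H̃_h = i Σ_{k=1}^{N} γ_{2k} γ_{2k+1}`. -/
def Hhtil (N : ℕ) : Op (N + 2) :=
  Complex.I • ∑ k ∈ Finset.range N,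
    maj (N + 2) (2 * (k + 1)) * maj (N + 2) (2 * (k + 1) + 1)

/-! Each factor `exp (-(π/4) γ_a γ_b)` equals `(1 - γ_a γ_b)/√2` and conjugates `γ_a ↦ γ_b`,
`γ_b ↦ -γ_a`, fixing every other Majorana; this only uses the Clifford relations. Hence one
period of the protocol moves the odd Majoranas two steps to the right and the even ones two
steps to the left along `1, …, 2N+2`, turning around at both ends: the cycle
`1 → 3 → ⋯ → 2N+1 → 2N+2 → 2N → ⋯ → 2 → 1`, where only the step `2 → 1` carries a sign.
After `N + 1` periods every Majorana has gone half way around this cycle of length `2N+2`,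
which reverses the segment, and exactly the even ones have passed the step `2 → 1`. The edge
Majoranas `γ_0` and `γ_{2N+3}` occur in neither Hamiltonian. -/

theorem pX_mul_pX : pX * pX = 1 := by simp [pX, Matrix.one_fin_two]
theorem pY_mul_pY : pY * pY = 1 := by simp [pY, Matrix.one_fin_two]
theorem pZ_mul_pZ : pZ * pZ = 1 := by simp [pZ, Matrix.one_fin_two]
theorem pX_mul_pZ : pX * pZ = -(pZ * pX) := by simp [pX, pZ]
theorem pY_mul_pZ : pY * pZ = -(pZ * pY) := by simp [pY, pZ]
theorem pX_mul_pY : pX * pY = -(pY * pX) := by simp [pX, pY]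
theorem pX_conjTranspose : pXᴴ = pX := by ext i j; fin_cases i <;> fin_cases j <;> simp [pX]
theorem pY_conjTranspose : pYᴴ = pY := by ext i j; fin_cases i <;> fin_cases j <;> simp [pY]
theorem pZ_conjTranspose : pZᴴ = pZ := by ext i j; fin_cases i <;> fin_cases j <;> simp [pZ]

section Site

variable {n : ℕ}

theorem site_mul_apply (P : Matrix (Fin 2) (Fin 2) ℂ) (j : Fin n) (M : Op n) (f g : Cfg n) :
    (site P j * M) f g = ∑ a, P (f j) a * M (Function.update f j a) g := by
  calc (site P j * M) f g
      = ∑ h, ∑ a, if h = Function.update f j a then P (f j) a * M h g else 0 := by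
        refine Finset.sum_congr rfl fun h _ => ?_
        simp only [site, Function.eq_update_iff, ite_and, Finset.sum_ite_eq, Finset.mem_univ,
          if_true]
        split_ifs <;> simp_all [eq_comm]
    _ = ∑ a, P (f j) a * M (Function.update f j a) g := by
        rw [Finset.sum_comm]; simp

theorem site_mul_site (P Q : Matrix (Fin 2) (Fin 2) ℂ) (j : Fin n) :
    site P j * site Q j = site (P * Q) j := by
  ext f g
  rw [site_mul_apply]
  simp +contextual [site, Function.update_of_ne, Matrix.mul_apply]

theorem site_mul_site_apply_of_ne {j k : Fin n} (hjk : j ≠ k) (P Q : Matrix (Fin 2) (Fin 2) ℂ)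
    (f g : Cfg n) :
    (site P j * site Q k) f g =
      if ∀ i, i ≠ j → i ≠ k → f i = g i then P (f j) (g j) * Q (f k) (g k) else 0 := by
  have hcond : ∀ a, (∀ i, i ≠ k → Function.update f j a i = g i) ↔
      a = g j ∧ ∀ i, i ≠ j → i ≠ k → f i = g i := fun a => by
    refine ⟨fun h => ⟨by simpa using h j hjk, fun i hij hik => by simpa [hij] using h i hik⟩, ?_⟩
    rintro ⟨rfl, h⟩ i hik
    by_cases hij : i = j
    · simp [hij]
    · simpa [hij] using h i hij hik
  rw [site_mul_apply]
  simp only [site, Function.update_of_ne hjk.symm, hcond, ite_and, mul_ite, mul_zero]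
  split_ifs <;> simp

theorem site_commute_site {P Q : Matrix (Fin 2) (Fin 2) ℂ} {j k : Fin n}
    (h : j ≠ k ∨ Commute P Q) : Commute (site P j) (site Q k) := by
  obtain rfl | hjk := eq_or_ne j k
  · rw [Commute, SemiconjBy, site_mul_site, site_mul_site, (h.resolve_left (by simp)).eq]
  · ext f g
    rw [site_mul_site_apply_of_ne hjk, site_mul_site_apply_of_ne hjk.symm, mul_comm]
    congr 1
    exact propext ⟨fun h i hk hj => h i hj hk, fun h i hj hk => h i hk hj⟩

theorem site_one (j : Fin n) : site 1 j = 1 := by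
  ext f g
  by_cases hfg : f = g
  · subst hfg; simp [site]
  · have hj : (∀ i, i ≠ j → f i = g i) → f j ≠ g j := fun h hj =>
      hfg (funext fun i => if hi : i = j then hi ▸ hj else h i hi)
    simp only [site, Matrix.one_apply, hfg]
    split_ifs <;> simp_all

theorem site_neg (P : Matrix (Fin 2) (Fin 2) ℂ) (j : Fin n) : site (-P) j = -site P j := by
  ext f g
  simp only [site, Matrix.neg_apply]
  split_ifs <;> simp

theorem site_conjTranspose (P : Matrix (Fin 2) (Fin 2) ℂ) (j : Fin n) :
    (site P j)ᴴ = site Pᴴ j := by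
  ext f g
  simp only [Matrix.conjTranspose_apply, site]
  split_ifs with h1 h2 h2 <;> simp_all [eq_comm]

end Site

section JordanWigner

variable {n : ℕ}

theorem parityBelow_commute_site {k : ℕ} {Q : Matrix (Fin 2) (Fin 2) ℂ} {j : Fin n}
    (h : k ≤ j ∨ Commute pZ Q) : Commute (parityBelow n k) (site Q j) := by
  induction k with
  | zero => exact Commute.one_left _
  | succ k ih =>
    refine (ih (h.imp (by omega) id)).mul_left ?_
    split_ifs with hk
    · refine (site_commute_site ?_).neg_left
      rcases h with h | h
      · exact Or.inl fun hkj => by rw [← hkj] at h; simp at h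
      · exact Or.inr h
    · exact Commute.one_left _

theorem parityBelow_commute (k l : ℕ) : Commute (parityBelow n k) (parityBelow n l) := by
  induction l with
  | zero => exact Commute.one_right _
  | succ l ih =>
    refine ih.mul_right ?_
    split_ifs
    · exact (parityBelow_commute_site (Or.inr (Commute.refl pZ))).neg_right
    · exact Commute.one_right _

theorem parityBelow_mul_site_of_lt {P : Matrix (Fin 2) (Fin 2) ℂ} (hP : P * pZ = -(pZ * P))
    {k : ℕ} {j : Fin n} (hj : (j : ℕ) < k) :
    parityBelow n k * site P j = -(site P j * parityBelow n k) := by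
  induction k with
  | zero => omega
  | succ k ih =>
    rw [parityBelow]
    obtain hjk | rfl := (Nat.lt_succ_iff.mp hj).lt_or_eq
    · have hc : Commute (if h : k < n then -site pZ ⟨k, h⟩ else 1) (site P j) := by
        split_ifs
        · exact (site_commute_site (Or.inl fun h => by simp [← h] at hjk)).neg_left
        · exact Commute.one_left _
      rw [mul_assoc, hc.eq, ← mul_assoc, ih hjk, neg_mul, mul_assoc]
    · have hZP : site pZ j * site P j = -(site P j * site pZ j) := by
        rw [site_mul_site, site_mul_site, ← site_neg, hP, neg_neg]
      have hc := parityBelow_commute_site (n := n) (Q := P) (j := j) (Or.inl le_rfl)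
      rw [dif_pos j.isLt, Fin.eta]
      simp only [mul_neg, neg_mul, neg_neg]
      rw [mul_assoc, hZP, mul_neg, neg_neg, ← mul_assoc, hc.eq, mul_assoc]

theorem parityBelow_mul_self (k : ℕ) : parityBelow n k * parityBelow n k = 1 := by
  induction k with
  | zero => simp [parityBelow]
  | succ k ih =>
    rw [parityBelow]
    split_ifs
    · rw [(parityBelow_commute_site (Or.inr (Commute.refl pZ))).neg_right.symm.mul_mul_mul_comm,
        ih, neg_mul_neg, site_mul_site, pZ_mul_pZ, site_one, one_mul]
    · simpa using ih

theorem parityBelow_conjTranspose (k : ℕ) : (parityBelow n k)ᴴ = parityBelow n k := by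
  induction k with
  | zero => simp [parityBelow]
  | succ k ih =>
    rw [parityBelow]
    split_ifs
    · rw [Matrix.conjTranspose_mul, Matrix.conjTranspose_neg, site_conjTranspose,
        pZ_conjTranspose, ih]
      exact (parityBelow_commute_site (Or.inr (Commute.refl pZ))).neg_right.eq.symm
    · simpa using ih

end JordanWigner

/-- Only the first `M` generators are constrained, since `maj n m = 0` for `m ≥ 2 * n`. -/
structure IsClifford {A : Type*} [Ring A] (γ : ℕ → A) (M : ℕ) : Prop where
  mul_self : ∀ a < M, γ a * γ a = 1
  anticomm : ∀ a < M, ∀ b < M, a ≠ b → γ a * γ b = -(γ b * γ a)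

section Majorana

variable {n : ℕ}

def majPauli (m : ℕ) : Matrix (Fin 2) (Fin 2) ℂ := if m % 2 = 0 then pX else pY

theorem majPauli_mul_self (m : ℕ) : majPauli m * majPauli m = 1 := by
  unfold majPauli; split_ifs <;> simp [pX_mul_pX, pY_mul_pY]

theorem majPauli_mul_pZ (m : ℕ) : majPauli m * pZ = -(pZ * majPauli m) := by
  unfold majPauli; split_ifs <;> simp [pX_mul_pZ, pY_mul_pZ]

theorem majPauli_conjTranspose (m : ℕ) : (majPauli m)ᴴ = majPauli m := by
  unfold majPauli; split_ifs <;> simp [pX_conjTranspose, pY_conjTranspose]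

theorem maj_eq {m : ℕ} (hm : m < 2 * n) :
    maj n m = parityBelow n (m / 2) * site (majPauli m) ⟨m / 2, by omega⟩ :=
  dif_pos _

theorem parityBelow_commute_maj_site {m : ℕ} (hm : m < 2 * n) (Q : Matrix (Fin 2) (Fin 2) ℂ) :
    Commute (parityBelow n (m / 2)) (site Q ⟨m / 2, by omega⟩) :=
  parityBelow_commute_site (Or.inl le_rfl)

theorem maj_mul_self {m : ℕ} (hm : m < 2 * n) : maj n m * maj n m = 1 := by
  rw [maj_eq hm, (parityBelow_commute_maj_site hm _).symm.mul_mul_mul_comm, parityBelow_mul_self,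
    site_mul_site, majPauli_mul_self, site_one, one_mul]

theorem maj_conjTranspose (m : ℕ) : (maj n m)ᴴ = maj n m := by
  by_cases hm : m < 2 * n
  · rw [maj_eq hm, Matrix.conjTranspose_mul, site_conjTranspose, majPauli_conjTranspose,
      parityBelow_conjTranspose, (parityBelow_commute_maj_site hm _).eq]
  · rw [maj, dif_neg (by omega), Matrix.conjTranspose_zero]

theorem maj_anticomm_of_lt {a b : ℕ} (hb : b < 2 * n) (hab : a < b) :
    maj n a * maj n b = -(maj n b * maj n a) := by
  have ha : a < 2 * n := hab.trans hb
  rw [maj_eq ha, maj_eq hb]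
  obtain hsite | hsite := (Nat.div_le_div_right (c := 2) hab.le).eq_or_lt
  · have hPa : majPauli a = pX := if_pos (by omega)
    have hPb : majPauli b = pY := if_neg (by omega)
    simp only [← hsite, hPa, hPb]
    set P := parityBelow n (a / 2)
    have hP : ∀ Q, Commute P (site Q ⟨a / 2, by omega⟩) := parityBelow_commute_maj_site ha
    rw [(hP pX).symm.mul_mul_mul_comm, (hP pY).symm.mul_mul_mul_comm, site_mul_site,
      site_mul_site, pX_mul_pY, site_neg, mul_neg]
  · set Pa := parityBelow n (a / 2)
    set Pb := parityBelow n (b / 2)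
    set Sa : Op n := site (majPauli a) ⟨a / 2, by omega⟩
    set Sb : Op n := site (majPauli b) ⟨b / 2, by omega⟩
    have hSaPb : Sa * Pb = -(Pb * Sa) := by
      rw [parityBelow_mul_site_of_lt (majPauli_mul_pZ a) hsite, neg_neg]
    have hPaSb : Commute Pa Sb := parityBelow_commute_site (Or.inl (by simp; omega))
    have hSaSb : Commute Sa Sb := site_commute_site (Or.inl (by simp; omega))
    calc Pa * Sa * (Pb * Sb) = Pa * (Sa * Pb) * Sb := by noncomm_ring
      _ = -(Pa * Pb * (Sa * Sb)) := by rw [hSaPb]; noncomm_ring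
      _ = -(Pb * (Pa * Sb) * Sa) := by
          rw [(parityBelow_commute _ _).eq, hSaSb.eq]; noncomm_ring
      _ = -(Pb * Sb * (Pa * Sa)) := by rw [hPaSb.eq]; noncomm_ring

theorem maj_isClifford : IsClifford (maj n) (2 * n) where
  mul_self _ := maj_mul_self
  anticomm a _ b hb hab := by
    obtain h | h := hab.lt_or_gt
    · exact maj_anticomm_of_lt hb h
    · rw [maj_anticomm_of_lt ‹a < 2 * n› h, neg_neg]

end Majorana

def braidLayer {A : Type*} [Ring A] (γ : ℕ → A) (c : ℕ) : ℕ → A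
  | 0 => 1
  | r + 1 => braidLayer γ c r * (1 - γ (c + 2 * r) * γ (c + 2 * r + 1))

namespace IsClifford

variable {A : Type*} [Ring A] {γ : ℕ → A} {M : ℕ}

theorem pair_mul_pair (hγ : IsClifford γ M) {a b : ℕ} (ha : a < M) (hb : b < M)
    (hab : a ≠ b) : γ a * γ b * (γ a * γ b) = -1 :=
  calc γ a * γ b * (γ a * γ b) = γ a * (γ b * γ a) * γ b := by noncomm_ring
    _ = -(γ a * γ a * (γ b * γ b)) := by rw [hγ.anticomm b hb a ha hab.symm]; noncomm_ring
    _ = -1 := by rw [hγ.mul_self a ha, hγ.mul_self b hb, one_mul]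

theorem commute_pair (hγ : IsClifford γ M) {a b m : ℕ} (ha : a < M) (hb : b < M) (hm : m < M)
    (hma : m ≠ a) (hmb : m ≠ b) : Commute (γ a * γ b) (γ m) :=
  calc γ a * γ b * γ m = -(γ a * (γ m * γ b)) := by
        rw [mul_assoc, hγ.anticomm b hb m hm hmb.symm, mul_neg]
    _ = γ m * (γ a * γ b) := by rw [← mul_assoc, hγ.anticomm a ha m hm hma.symm]; noncomm_ring

theorem semiconjBy_braid_left (hγ : IsClifford γ M) {a b : ℕ} (ha : a < M) (hb : b < M)
    (hab : a ≠ b) : SemiconjBy (1 - γ a * γ b) (γ a) (γ b) := by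
  have h₁ : γ a * γ b * γ a = -γ b := by
    rw [mul_assoc, hγ.anticomm b hb a ha hab.symm, mul_neg, ← mul_assoc, hγ.mul_self a ha,
      one_mul]
  have h₂ : γ b * (γ a * γ b) = -γ a := by
    rw [← mul_assoc, hγ.anticomm b hb a ha hab.symm, neg_mul, mul_assoc, hγ.mul_self b hb,
      mul_one]
  rw [SemiconjBy, sub_mul, mul_sub, one_mul, mul_one, h₁, h₂]
  abel

theorem semiconjBy_braid_right (hγ : IsClifford γ M) {a b : ℕ} (ha : a < M) (hb : b < M) :
    SemiconjBy (1 - γ a * γ b) (γ b) (-γ a) := by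
  rw [SemiconjBy, sub_mul, one_mul, mul_assoc, hγ.mul_self b hb, mul_one, mul_sub, mul_one,
    neg_mul, ← mul_assoc, hγ.mul_self a ha, one_mul]
  abel

theorem semiconjBy_braidLayer (hγ : IsClifford γ M) {c r m : ℕ} (hr : c + 2 * r ≤ M)
    (hm : m < M) :
    SemiconjBy (braidLayer γ c r) (γ m)
      (if c ≤ m ∧ m < c + 2 * r then (if (m - c) % 2 = 0 then γ (m + 1) else -γ (m - 1))
        else γ m) := by
  induction r generalizing m with
  | zero => rw [if_neg (by omega)]; exact SemiconjBy.one_left _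
  | succ r ih =>
    rw [braidLayer]
    have ha : c + 2 * r < M := by omega
    have hb : c + 2 * r + 1 < M := by omega
    by_cases hma : m = c + 2 * r
    · subst hma
      have hL := ih (m := c + 2 * r + 1) (by omega) hb
      rw [if_neg (by omega)] at hL
      rw [if_pos (by omega), if_pos (by omega)]
      exact hL.mul_left (hγ.semiconjBy_braid_left ha hb (by omega))
    by_cases hmb : m = c + 2 * r + 1
    · subst hmb
      have hL := ih (m := c + 2 * r) (by omega) ha
      rw [if_neg (by omega)] at hL
      rw [if_pos (by omega), if_neg (by omega), Nat.add_sub_cancel]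
      exact hL.neg_right.mul_left (hγ.semiconjBy_braid_right ha hb)
    · have hB : Commute (1 - γ (c + 2 * r) * γ (c + 2 * r + 1)) (γ m) :=
        (Commute.one_left _).sub_left (hγ.commute_pair ha hb hm hma hmb)
      have hrange : (c ≤ m ∧ m < c + 2 * (r + 1)) ↔ (c ≤ m ∧ m < c + 2 * r) := by omega
      simpa only [hrange] using (ih (by omega) hm).mul_left hB.semiconjBy

theorem semiconjBy_braidLayer_of_even (hγ : IsClifford γ M) {c r m : ℕ} (hr : c + 2 * r ≤ M)
    (hcm : c ≤ m) (hmr : m < c + 2 * r) (hev : (m - c) % 2 = 0) :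
    SemiconjBy (braidLayer γ c r) (γ m) (γ (m + 1)) := by
  simpa [hcm, hmr, hev] using hγ.semiconjBy_braidLayer hr (m := m) (by omega)

theorem semiconjBy_braidLayer_of_odd (hγ : IsClifford γ M) {c r m : ℕ} (hr : c + 2 * r ≤ M)
    (hcm : c ≤ m) (hmr : m < c + 2 * r) (hodd : (m - c) % 2 = 1) :
    SemiconjBy (braidLayer γ c r) (γ m) (-γ (m - 1)) := by
  simpa [hcm, hmr, hodd] using hγ.semiconjBy_braidLayer hr (m := m) (by omega)

theorem commute_braidLayer (hγ : IsClifford γ M) {c r m : ℕ} (hr : c + 2 * r ≤ M)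
    (hm : m < M) (hout : m < c ∨ c + 2 * r ≤ m) : Commute (braidLayer γ c r) (γ m) := by
  have h := hγ.semiconjBy_braidLayer hr hm
  rwa [if_neg (by omega)] at h

end IsClifford

open NormedSpace in
theorem exp_smul_eq_cos_add_sin {𝔸 : Type*} [NormedRing 𝔸] [NormedAlgebra ℝ 𝔸] {J : 𝔸}
    (hJ : J * J = -1) (t : ℝ) : exp (t • J) = Real.cos t • (1 : 𝔸) + Real.sin t • J := by
  have hφ : Continuous (Complex.liftAux J hJ) :=
    (Complex.liftAux J hJ).toLinearMap.continuous_of_finiteDimensional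
  have h := map_exp_of_mem_ball (𝕂 := ℝ) _ hφ (t * Complex.I)
    (by simp [expSeries_radius_eq_top])
  rw [← Complex.exp_eq_exp_ℂ, Complex.exp_mul_I] at h
  simpa [Complex.liftAux_apply, Algebra.algebraMap_eq_smul_one, Complex.cos_ofReal_re,
    Complex.sin_ofReal_re] using h.symm

theorem exp_neg_pi_div_four_smul {𝔸 : Type*} [NormedRing 𝔸] [NormedAlgebra ℝ 𝔸] {J : 𝔸}
    (hJ : J * J = -1) : NormedSpace.exp ((-(Real.pi / 4)) • J) = (√2 / 2) • (1 - J) := by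
  rw [exp_smul_eq_cos_add_sin hJ, Real.cos_neg, Real.sin_neg, Real.cos_pi_div_four,
    Real.sin_pi_div_four, smul_sub, neg_smul, sub_eq_add_neg]

def braidExponent {A : Type*} [Ring A] [Module ℝ A] (γ : ℕ → A) (c r : ℕ) : A :=
  ∑ k ∈ Finset.range r, (-(Real.pi / 4)) • (γ (c + 2 * k) * γ (c + 2 * k + 1))

theorem braidExponent_succ {A : Type*} [Ring A] [Module ℝ A] (γ : ℕ → A) (c r : ℕ) :
    braidExponent γ c (r + 1) =
      braidExponent γ c r + (-(Real.pi / 4)) • (γ (c + 2 * r) * γ (c + 2 * r + 1)) :=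
  Finset.sum_range_succ _ _

section MatrixExp

variable {ι : Type*} [Fintype ι] [DecidableEq ι]

theorem Matrix.exp_mem_unitaryGroup {X : Matrix ι ι ℂ} (hX : Xᴴ = -X) :
    NormedSpace.exp X ∈ Matrix.unitaryGroup ι ℂ := by
  rw [Matrix.mem_unitaryGroup_iff, Matrix.star_eq_conjTranspose, ← Matrix.exp_conjTranspose, hX,
    ← Matrix.exp_add_of_commute _ _ (Commute.refl X).neg_right, add_neg_cancel,
    NormedSpace.exp_zero]

variable {γ : ℕ → Matrix ι ι ℂ} {M : ℕ}

theorem IsClifford.exp_braidExponent (hγ : IsClifford γ M) {c r : ℕ} (hr : c + 2 * r ≤ M) :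
    NormedSpace.exp (braidExponent γ c r) = (√2 / 2) ^ r • braidLayer γ c r := by
  induction r with
  | zero => simp [braidExponent, braidLayer]
  | succ r ih =>
    have hpairs : Commute (braidExponent γ c r)
        ((-(Real.pi / 4)) • (γ (c + 2 * r) * γ (c + 2 * r + 1))) := by
      refine Commute.sum_left _ _ _ fun k hk =>
        ((Commute.mul_right ?_ ?_).smul_left _).smul_right _
      all_goals
        simp only [Finset.mem_range] at hk
        exact hγ.commute_pair (by omega) (by omega) (by omega) (by omega) (by omega)
    have hJ := hγ.pair_mul_pair (a := c + 2 * r) (b := c + 2 * r + 1) (by omega) (by omega)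
      (by omega)
    have hexp : NormedSpace.exp ((-(Real.pi / 4)) • (γ (c + 2 * r) * γ (c + 2 * r + 1))) =
        (√2 / 2) • (1 - γ (c + 2 * r) * γ (c + 2 * r + 1)) := by
      -- `exp` only sees the topology, so any normed-algebra structure on matrices will do
      open scoped Matrix.Norms.Operator in exact exp_neg_pi_div_four_smul hJ
    rw [braidExponent_succ, Matrix.exp_add_of_commute _ _ hpairs, ih (by omega), hexp,
      braidLayer, pow_succ, smul_mul_smul_comm]

theorem IsClifford.braidExponent_conjTranspose (hγ : IsClifford γ M) (hγH : ∀ m, (γ m)ᴴ = γ m)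
    {c r : ℕ} (hr : c + 2 * r ≤ M) : (braidExponent γ c r)ᴴ = -braidExponent γ c r := by
  rw [braidExponent, Matrix.conjTranspose_sum, ← Finset.sum_neg_distrib]
  refine Finset.sum_congr rfl fun k hk => ?_
  simp only [Finset.mem_range] at hk
  rw [Matrix.conjTranspose_smul, Matrix.conjTranspose_mul, hγH, hγH,
    hγ.anticomm _ (by omega) _ (by omega) (by omega), star_trivial, smul_neg]

end MatrixExp

theorem I_mul_pi_div_four_mul_I :
    Complex.I * ((Real.pi / 4 : ℝ) : ℂ) * Complex.I = ((-(Real.pi / 4) : ℝ) : ℂ) := by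
  push_cast
  linear_combination (Real.pi / 4 : ℂ) * Complex.I_sq

theorem I_mul_pi_div_four_smul_Hhtil (N : ℕ) :
    (Complex.I * (Real.pi / 4 : ℝ)) • Hhtil N = braidExponent (maj (N + 2)) 2 N := by
  rw [Hhtil, braidExponent, smul_smul, Finset.smul_sum]
  refine Finset.sum_congr rfl fun k _ => ?_
  rw [I_mul_pi_div_four_mul_I, Complex.coe_smul, mul_add, mul_one, add_comm (2 * k)]

theorem I_mul_pi_div_four_smul_HJtil (N : ℕ) :
    (Complex.I * (Real.pi / 4 : ℝ)) • HJtil N = braidExponent (maj (N + 2)) 1 (N + 1) := by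
  rw [HJtil, braidExponent, smul_smul, Finset.smul_sum]
  refine Finset.sum_congr rfl fun k _ => ?_
  rw [I_mul_pi_div_four_mul_I, Complex.coe_smul, show 2 * k + 2 = 1 + 2 * k + 1 by ring,
    add_comm (2 * k) 1]

def protocolStep (N : ℕ) : Op (N + 2) :=
  NormedSpace.exp ((Complex.I * (Real.pi / 4 : ℝ)) • Hhtil N) *
    NormedSpace.exp ((Complex.I * (Real.pi / 4 : ℝ)) • HJtil N)

theorem protocolStep_eq (N : ℕ) :
    protocolStep N = ((√2 / 2) ^ N * (√2 / 2) ^ (N + 1)) •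
      (braidLayer (maj (N + 2)) 2 N * braidLayer (maj (N + 2)) 1 (N + 1)) := by
  rw [protocolStep, I_mul_pi_div_four_smul_Hhtil, I_mul_pi_div_four_smul_HJtil,
    maj_isClifford.exp_braidExponent (by omega), maj_isClifford.exp_braidExponent (by omega),
    smul_mul_smul_comm]

theorem protocolStep_mem_unitaryGroup (N : ℕ) :
    protocolStep N ∈ Matrix.unitaryGroup (Cfg (N + 2)) ℂ := by
  have hskew : ∀ c r, c + 2 * r ≤ 2 * (N + 2) →
      (braidExponent (maj (N + 2)) c r)ᴴ = -braidExponent (maj (N + 2)) c r := fun c r hr =>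
    maj_isClifford.braidExponent_conjTranspose maj_conjTranspose hr
  rw [protocolStep, I_mul_pi_div_four_smul_Hhtil, I_mul_pi_div_four_smul_HJtil]
  exact mul_mem (Matrix.exp_mem_unitaryGroup (hskew _ _ (by omega)))
    (Matrix.exp_mem_unitaryGroup (hskew _ _ (by omega)))

theorem commute_protocolStep_maj {N m : ℕ} (hm : m = 0 ∨ m = 2 * N + 3) :
    Commute (protocolStep N) (maj (N + 2) m) := by
  rw [protocolStep_eq]
  exact ((maj_isClifford.commute_braidLayer (by omega) (by omega) (by omega)).mul_left
    (maj_isClifford.commute_braidLayer (by omega) (by omega) (by omega))).smul_left _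

def roundIdx (N m : ℕ) : ℕ :=
  if m % 2 = 1 then (if m = 2 * N + 1 then 2 * N + 2 else m + 2)
  else (if m = 2 then 1 else m - 2)

def roundSign (m : ℕ) : ℂ := if m = 2 then -1 else 1

theorem semiconjBy_protocolStep {N m : ℕ} (hm₁ : 1 ≤ m) (hm₂ : m ≤ 2 * N + 2) :
    SemiconjBy (protocolStep N) (maj (N + 2) m) (roundSign m • maj (N + 2) (roundIdx N m)) := by
  have hγ : IsClifford (maj (N + 2)) (2 * (N + 2)) := maj_isClifford
  rw [protocolStep_eq]
  refine SemiconjBy.smul_left ?_ _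
  obtain hev | hodd := Nat.mod_two_eq_zero_or_one m
  · have h₁ := hγ.semiconjBy_braidLayer_of_odd (c := 1) (r := N + 1) (m := m) (by omega)
      (by omega) (by omega) (by omega)
    by_cases htwo : m = 2
    · subst htwo
      rw [show roundSign 2 = -1 from if_pos rfl, show roundIdx N 2 = 1 from rfl, neg_one_smul]
      exact (hγ.commute_braidLayer (by omega) (by omega) (by omega)).semiconjBy.neg_right.mul_left
        h₁
    · rw [show roundSign m = 1 from if_neg htwo, one_smul,
        show roundIdx N m = m - 2 by unfold roundIdx; split_ifs <;> omega]
      have h₂ := (hγ.semiconjBy_braidLayer_of_odd (c := 2) (r := N) (m := m - 1) (by omega)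
        (by omega) (by omega) (by omega)).neg_right.mul_left h₁
      rwa [neg_neg, show m - 1 - 1 = m - 2 by omega] at h₂
  · have h₁ := hγ.semiconjBy_braidLayer_of_even (c := 1) (r := N + 1) (m := m) (by omega)
      (by omega) (by omega) (by omega)
    rw [show roundSign m = 1 from if_neg (by omega), one_smul]
    by_cases hlast : m = 2 * N + 1
    · rw [show roundIdx N m = m + 1 by unfold roundIdx; split_ifs; omega]
      exact (hγ.commute_braidLayer (by omega) (by omega) (by omega)).semiconjBy.mul_left h₁
    · rw [show roundIdx N m = m + 1 + 1 by unfold roundIdx; split_ifs; omega]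
      exact (hγ.semiconjBy_braidLayer_of_even (by omega) (by omega) (by omega)
        (by omega)).mul_left h₁

/-- `roundIdx N` iterated `r ≤ N + 1` times: each Majorana has turned around at most once. -/
def sortIdx (N r k : ℕ) : ℕ :=
  if k % 2 = 1 then (if k + 2 * r ≤ 2 * N + 1 then k + 2 * r else 4 * N + 5 - (k + 2 * r))
  else (if 2 * r < k then k - 2 * r else 2 * r + 1 - k)

def sortSign (r k : ℕ) : ℂ := if k % 2 = 0 ∧ k ≤ 2 * r then -1 else 1

theorem sortIdx_roundIdx {N r k : ℕ} (hr : r ≤ N) (hk₁ : 1 ≤ k) (hk₂ : k ≤ 2 * N + 2) :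
    sortIdx N r (roundIdx N k) = sortIdx N (r + 1) k := by
  unfold sortIdx roundIdx
  split_ifs <;> omega

theorem roundSign_mul_sortSign {N r k : ℕ} (hr : r ≤ N) (hk : 1 ≤ k) :
    roundSign k * sortSign r (roundIdx N k) = sortSign (r + 1) k := by
  unfold roundSign sortSign roundIdx
  split_ifs <;> first | omega | norm_num at *

theorem semiconjBy_protocolStep_pow {N r k : ℕ} (hr : r ≤ N + 1) (hk₁ : 1 ≤ k)
    (hk₂ : k ≤ 2 * N + 2) :
    SemiconjBy (protocolStep N ^ r) (maj (N + 2) k)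
      (sortSign r k • maj (N + 2) (sortIdx N r k)) := by
  induction r generalizing k with
  | zero =>
    rw [pow_zero, show sortSign 0 k = 1 from if_neg (by omega), one_smul,
      show sortIdx N 0 k = k by unfold sortIdx; split_ifs <;> omega]
    exact SemiconjBy.one_left _
  | succ r ih =>
    obtain ⟨hg₁, hg₂⟩ : 1 ≤ roundIdx N k ∧ roundIdx N k ≤ 2 * N + 2 := by
      unfold roundIdx; split_ifs <;> omega
    have hrest := (ih (by omega) hg₁ hg₂).smul_right (roundSign k)
    rw [smul_smul, roundSign_mul_sortSign (by omega) hk₁,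
      sortIdx_roundIdx (by omega) hk₁ hk₂] at hrest
    rw [pow_succ]
    exact hrest.mul_left (semiconjBy_protocolStep hk₁ hk₂)

theorem sortIdx_succ_self {N k : ℕ} (hk₁ : 1 ≤ k) (hk₂ : k ≤ 2 * N + 2) :
    sortIdx N (N + 1) k = 2 * N + 3 - k := by
  unfold sortIdx
  split_ifs <;> omega

theorem sortSign_succ_of_le {N k : ℕ} (hk₁ : 1 ≤ k) (hk₂ : k ≤ 2 * N + 2) :
    sortSign (N + 1) k = (-1) ^ (k - 1) := by
  unfold sortSign
  split_ifs with h
  · rw [(Nat.odd_iff.mpr (by omega)).neg_one_pow]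
  · rw [(Nat.even_iff.mpr (by omega)).neg_one_pow]

/-- The time-dependent protocol unitary `(e^{iπH̃_h/4} e^{iπH̃_J/4})^{N+1}`
fixes the edge Majoranas and maps `γ_k ↦ (−1)^{k−1} γ_{2N+3−k}` for
`1 ≤ k ≤ 2N+2`. -/
theorem stmt_18 (N : ℕ) :
    (NormedSpace.exp ((Complex.I * (Real.pi / 4 : ℝ)) • Hhtil N) *
        NormedSpace.exp ((Complex.I * (Real.pi / 4 : ℝ)) • HJtil N)) ^ (N + 1) *
          maj (N + 2) 0 *
        ((NormedSpace.exp ((Complex.I * (Real.pi / 4 : ℝ)) • Hhtil N) *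
          NormedSpace.exp ((Complex.I * (Real.pi / 4 : ℝ)) • HJtil N)) ^ (N + 1))ᴴ =
      maj (N + 2) 0 ∧
    (NormedSpace.exp ((Complex.I * (Real.pi / 4 : ℝ)) • Hhtil N) *
        NormedSpace.exp ((Complex.I * (Real.pi / 4 : ℝ)) • HJtil N)) ^ (N + 1) *
          maj (N + 2) (2 * N + 3) *
        ((NormedSpace.exp ((Complex.I * (Real.pi / 4 : ℝ)) • Hhtil N) *
          NormedSpace.exp ((Complex.I * (Real.pi / 4 : ℝ)) • HJtil N)) ^ (N + 1))ᴴ =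
      maj (N + 2) (2 * N + 3) ∧
    ∀ k : ℕ, 1 ≤ k → k ≤ 2 * N + 2 →
      (NormedSpace.exp ((Complex.I * (Real.pi / 4 : ℝ)) • Hhtil N) *
          NormedSpace.exp ((Complex.I * (Real.pi / 4 : ℝ)) • HJtil N)) ^ (N + 1) *
            maj (N + 2) k *
          ((NormedSpace.exp ((Complex.I * (Real.pi / 4 : ℝ)) • Hhtil N) *
            NormedSpace.exp ((Complex.I * (Real.pi / 4 : ℝ)) • HJtil N)) ^ (N + 1))ᴴ =
        ((-1 : ℂ) ^ (k - 1)) • maj (N + 2) (2 * N + 3 - k) := by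
  have hunitary : protocolStep N ^ (N + 1) * (protocolStep N ^ (N + 1))ᴴ = 1 := by
    rw [← Matrix.star_eq_conjTranspose, ← Matrix.mem_unitaryGroup_iff]
    exact pow_mem (protocolStep_mem_unitaryGroup N) _
  have conj {x y : Op (N + 2)} (h : SemiconjBy (protocolStep N ^ (N + 1)) x y) :
      protocolStep N ^ (N + 1) * x * (protocolStep N ^ (N + 1))ᴴ = y := by
    rw [h.eq, mul_assoc, hunitary, mul_one]
  refine ⟨conj ((commute_protocolStep_maj (Or.inl rfl)).pow_left _).semiconjBy,
    conj ((commute_protocolStep_maj (Or.inr rfl)).pow_left _).semiconjBy, fun k hk₁ hk₂ => ?_⟩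
  have h := semiconjBy_protocolStep_pow le_rfl hk₁ hk₂
  rw [sortIdx_succ_self hk₁ hk₂, sortSign_succ_of_le hk₁ hk₂] at h
  exact conj h

end
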